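/- arXiv:2209.04373 — 2 statements merged into one kernel-verified Lean document; each statement's English description precedes it below -/
import Mathlib

section
/- Let x, y ∈ ℕ^n with x ≺ y, and let (p_1,...,p_τ) and (q_1,...,q_τ) be sequences of pairwise-distinct indices in {1,...,n} (each sequence has distinct entries) with p_l ≥ q_l for all l. Then x↓ + Σ_l e_{p_l} is majorized by y↓ + Σ_l e_{q_l}. -/
/-!
On `ℕⁿ` the sum of the `k` largest entries of `x` is `min_t (k t + ∑ i, (x i - t)⁺)`, so weak
majorization is the comparison of the excesses `∑ i, (x i - t)⁺` at every threshold `t`.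
Adding the unit vectors `e_{p_l}` to `x↓` raises its excess at `t` by the number of `p_l` in the
prefix `i < M` where `x↓ ≥ t`. Since `q_l ≤ p_l`, all but at most `M - N` of them are matched by
`q_l` in the prefix `i < N` where `y↓ ≥ t`, and `x ≺ y` at threshold `t - 1` absorbs the rest.
Both totals grow by `τ`.
-/

open Finset

/-- Nondecreasing rearrangement of a finite vector. -/
def sortAsc {n : ℕ} {α : Type*} [LinearOrder α] (x : Fin n → α) : Fin n → α :=
  x ∘ Tuple.sort x

/-- Nonincreasing rearrangement of a finite vector. -/
def sortDesc {n : ℕ} {α : Type*} [LinearOrder α] (x : Fin n → α) : Fin n → α :=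
  fun i => sortAsc x i.rev

/-- Sum of the entries of `f` at positions `< k`. -/
def psum {n : ℕ} {α : Type*} [AddCommMonoid α] (f : Fin n → α) (k : ℕ) : α :=
  ∑ i : Fin n, if (i : ℕ) < k then f i else 0

/-- `x` is majorized by `y`: every partial sum of the `k` largest entries of `x`
is at most that of `y`, and the total sums agree. -/
def Maj {n : ℕ} {α : Type*} [AddCommMonoid α] [LinearOrder α] [IsOrderedAddMonoid α] (x y : Fin n → α) : Prop :=
  (∀ k : ℕ, psum (sortDesc x) k ≤ psum (sortDesc y) k) ∧ (∑ i, x i) = ∑ i, y i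

/-- Weak submajorization: the sum of the `k` largest entries of `x` is at most
that of `y`, for every `k`. -/
def WeakSub {n : ℕ} {α : Type*} [AddCommMonoid α] [LinearOrder α] [IsOrderedAddMonoid α] (x y : Fin n → α) : Prop :=
  ∀ k : ℕ, psum (sortDesc x) k ≤ psum (sortDesc y) k

/-- Weak supermajorization: the sum of the `k` smallest entries of `x` is at least
that of `y`, for every `k`. -/
def WeakSuper {n : ℕ} {α : Type*} [AddCommMonoid α] [LinearOrder α] [IsOrderedAddMonoid α] (x y : Fin n → α) : Prop :=
  ∀ k : ℕ, psum (sortAsc y) k ≤ psum (sortAsc x) k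

/-- `f i - t` is truncated subtraction, so this is `∑ i, (f i - t)⁺`. -/
def excess {n : ℕ} (f : Fin n → ℕ) (t : ℕ) : ℕ := ∑ i, (f i - t)

section Sorting

variable {n : ℕ} {α : Type*} [LinearOrder α]

lemma sum_comp_sortDesc {M : Type*} [AddCommMonoid M] (f : Fin n → α) (g : α → M) :
    ∑ i, g (sortDesc f i) = ∑ i, g (f i) :=
  Fintype.sum_equiv (Fin.revPerm.trans (Tuple.sort f)) _ _ fun _ => rfl

lemma antitone_sortDesc (f : Fin n → α) : Antitone (sortDesc f) :=
  fun _ _ hij => Tuple.monotone_sort f (Fin.rev_le_rev.mpr hij)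

end Sorting

section Excess

variable {n : ℕ}

lemma excess_sortDesc (f : Fin n → ℕ) : excess (sortDesc f) = excess f :=
  funext fun t => sum_comp_sortDesc f (· - t)

lemma excess_succ_add_card (f : Fin n → ℕ) (t : ℕ) :
    excess f (t + 1) + #{i | t + 1 ≤ f i} = excess f t := by
  rw [card_filter, excess, excess, ← sum_add_distrib]
  exact sum_congr rfl fun i _ => by split <;> omega

lemma excess_add_card_le_of_forall_le {x y : Fin n → ℕ} (h : ∀ t, excess x t ≤ excess y t)
    (t : ℕ) :
    excess x t + #{i | t ≤ x i} ≤ excess y t + #{i | t ≤ y i} := by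
  cases t with
  | zero => simpa using h 0
  | succ t => simpa only [excess_succ_add_card] using h t

end Excess

section Threshold

variable {n : ℕ}

lemma sum_ite_val_lt_const (k t : ℕ) :
    ∑ i : Fin n, (if (i : ℕ) < k then t else 0) = min n k * t := by
  rw [← sum_filter, sum_const, Fin.card_filter_val_lt, smul_eq_mul]

lemma psum_le_min_mul_add_excess (d : Fin n → ℕ) (k t : ℕ) :
    psum d k ≤ min n k * t + excess d t := by
  rw [← sum_ite_val_lt_const, excess, ← sum_add_distrib]
  exact sum_le_sum fun i _ => by split <;> omega

lemma psum_eq_min_mul_add_excess {d : Fin n → ℕ} {k t : ℕ}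
    (hlt : ∀ i : Fin n, (i : ℕ) < k → t ≤ d i) (hge : ∀ i : Fin n, k ≤ (i : ℕ) → d i ≤ t) :
    psum d k = min n k * t + excess d t := by
  rw [← sum_ite_val_lt_const, excess, ← sum_add_distrib]
  refine sum_congr rfl fun i _ => ?_
  by_cases hi : (i : ℕ) < k
  · have := hlt i hi
    simp only [hi, if_true]
    omega
  · have := hge i (not_lt.1 hi)
    simp only [hi, if_false]
    omega

lemma exists_psum_eq_min_mul_add_excess {d : Fin n → ℕ} (hd : Antitone d) (k : ℕ) :
    ∃ t, psum d k = min n k * t + excess d t := by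
  by_cases hk : k < n
  · exact ⟨d ⟨k, hk⟩, psum_eq_min_mul_add_excess (fun i hi => hd (Fin.le_def.2 hi.le))
      fun i hi => hd (Fin.le_def.2 hi)⟩
  · exact ⟨0, psum_eq_min_mul_add_excess (fun _ _ => Nat.zero_le _)
      fun i hi => (hk (hi.trans_lt i.isLt)).elim⟩

lemma le_iff_lt_card_of_antitone {d : Fin n → ℕ} (hd : Antitone d) (t : ℕ) (i : Fin n) :
    t ≤ d i ↔ (i : ℕ) < #{j | t ≤ d j} :=
  (Fin.lt_card_filter_univ_iff_apply_of_imp (t ≤ d ·) fun _ _ hji hi => hi.trans (hd hji)).symm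

/-- The sum of the `k` largest entries is `min_t (min n k * t + excess t)`. -/
lemma weakSub_iff_excess_le {x y : Fin n → ℕ} :
    WeakSub x y ↔ ∀ t, excess x t ≤ excess y t := by
  rw [← excess_sortDesc x, ← excess_sortDesc y]
  constructor
  · intro h t
    have hM := le_iff_lt_card_of_antitone (antitone_sortDesc x) t
    have hx := psum_eq_min_mul_add_excess (fun i hi => (hM i).2 hi)
      fun i hi => (not_le.1 fun h' => (hM i).1 h' |>.not_ge hi).le
    have hy := psum_le_min_mul_add_excess (sortDesc y) #{j | t ≤ sortDesc x j} t
    have := h #{j | t ≤ sortDesc x j}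
    omega
  · intro h k
    obtain ⟨t, ht⟩ := exists_psum_eq_min_mul_add_excess (antitone_sortDesc y) k
    have := psum_le_min_mul_add_excess (sortDesc x) k t
    have := h t
    omega

end Threshold

section Counts

variable {n : ℕ} {ι : Type*} [Fintype ι]

lemma card_val_lt_le_card_add_sub {p q : ι → ℕ} (hp : Function.Injective p)
    (hpq : ∀ l, q l ≤ p l) (M N : ℕ) :
    #{l | p l < M} ≤ #{l | q l < N} + (M - N) := by
  classical
  have hsplit : #{l | p l < M} ≤ #{l | q l < N} + #{l | N ≤ p l ∧ p l < M} := by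
    refine (card_le_card fun l hl => ?_).trans (card_union_le _ _)
    simp only [mem_union, mem_filter, mem_univ, true_and] at hl ⊢
    by_cases hN : p l < N
    · exact .inl ((hpq l).trans_lt hN)
    · exact .inr ⟨not_lt.1 hN, hl⟩
  have hwindow : #{l | N ≤ p l ∧ p l < M} ≤ M - N := by
    rw [← Nat.card_Ico N M]
    exact card_le_card_of_injOn p (fun l hl => by simpa using hl) hp.injOn
  omega

lemma sum_ite_le_count_eq_card (d : Fin n → ℕ) (p : ι → Fin n) (t : ℕ) :
    ∑ i, (if t ≤ d i then ∑ l, if p l = i then 1 else 0 else 0) = #{l | t ≤ d (p l)} := by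
  rw [← sum_filter, sum_comm, card_filter]
  simp

lemma excess_add_count_of_injective (d : Fin n → ℕ) {p : ι → Fin n}
    (hp : Function.Injective p) (t : ℕ) :
    excess (fun i => d i + ∑ l, if p l = i then 1 else 0) t = excess d t + #{l | t ≤ d (p l)} := by
  have hcount (i : Fin n) : (∑ l, if p l = i then 1 else 0) ≤ 1 := by
    rw [← card_filter]
    exact card_le_one.2 fun a ha b hb => hp ((mem_filter.1 ha).2.trans (mem_filter.1 hb).2.symm)
  rw [← sum_ite_le_count_eq_card, excess, excess, ← sum_add_distrib]
  refine sum_congr rfl fun i _ => ?_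
  have := hcount i
  split <;> omega

lemma excess_add_card_le_excess_add_count (d : Fin n → ℕ) (q : ι → Fin n) (t : ℕ) :
    excess d t + #{l | t ≤ d (q l)} ≤ excess (fun i => d i + ∑ l, if q l = i then 1 else 0) t := by
  rw [← sum_ite_le_count_eq_card, excess, excess, ← sum_add_distrib]
  exact sum_le_sum fun i _ => by split <;> omega

lemma sum_count (p : ι → Fin n) : ∑ i, ∑ l, (if p l = i then 1 else 0) = Fintype.card ι := by
  rw [sum_comm]
  simp

/-- `t ≤ d i` cuts out a prefix `i < M` and `t ≤ e i` a prefix `i < N`; at most `M - N` of the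
`p l` lie in between, and the comparison of excesses at `t - 1` pays for them. -/
lemma excess_add_card_comp_le {d e : Fin n → ℕ} (hd : Antitone d) (he : Antitone e)
    (hde : ∀ t, excess d t ≤ excess e t) {p q : ι → Fin n} (hp : Function.Injective p)
    (hpq : ∀ l, q l ≤ p l) (t : ℕ) :
    excess d t + #{l | t ≤ d (p l)} ≤ excess e t + #{l | t ≤ e (q l)} := by
  rw [filter_congr fun l _ => le_iff_lt_card_of_antitone hd t (p l),
    filter_congr fun l _ => le_iff_lt_card_of_antitone he t (q l)]
  have := card_val_lt_le_card_add_sub (p := fun l => (p l : ℕ)) (q := fun l => (q l : ℕ))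
    (Fin.val_injective.comp hp) hpq #{i | t ≤ d i} #{i | t ≤ e i}
  have := excess_add_card_le_of_forall_le hde t
  have := hde t
  omega

end Counts

theorem stmt_8_general {n τ : ℕ} (x y : Fin n → ℕ) (h : Maj x y)
    (p q : Fin τ → Fin n) (hp : Function.Injective p)
    (hpq : ∀ l, q l ≤ p l) :
    Maj (fun i => sortDesc x i + ∑ l : Fin τ, if p l = i then 1 else 0)
        (fun i => sortDesc y i + ∑ l : Fin τ, if q l = i then 1 else 0) := by
  have hxy : ∀ t, excess (sortDesc x) t ≤ excess (sortDesc y) t := by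
    simpa only [excess_sortDesc] using weakSub_iff_excess_le.1 h.1
  refine ⟨weakSub_iff_excess_le.2 fun t => ?_, ?_⟩
  · rw [excess_add_count_of_injective _ hp]
    exact (excess_add_card_comp_le (antitone_sortDesc x) (antitone_sortDesc y) hxy hp
      hpq t).trans (excess_add_card_le_excess_add_count _ q t)
  · simp only [sum_add_distrib, sum_count]
    congr 1
    exact (sum_comp_sortDesc x id).trans (h.2.trans (sum_comp_sortDesc y id).symm)

theorem stmt_8 {n τ : ℕ} (x y : Fin n → ℕ) (h : Maj x y)
    (p q : Fin τ → Fin n) (hp : Function.Injective p) (hq : Function.Injective q)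
    (hpq : ∀ l, q l ≤ p l) :
    Maj (fun i => sortDesc x i + ∑ l : Fin τ, if p l = i then 1 else 0)
        (fun i => sortDesc y i + ∑ l : Fin τ, if q l = i then 1 else 0) :=
  stmt_8_general x y h p q hp hpq
end

section
/- Let c ∈ ℕ^n be nonincreasing and r ∈ ℕ^m, and let X = {x↓ : x ∈ ℕ^n, x ≺ r*, x ≤ c} be the canonical feasible set. If x, y ∈ X, then the meet z of x and y in the majorization lattice of partitions of Σ_i r_i also satisfies z ≤ c componentwise and z ≺ r*; hence z ∈ X. -/
open Finset

/-- Partition conjugate of `r ∈ ℕ^m`, taken with dimension `n`: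
its `j`-th entry (1-indexed `j+1`) counts the indices `i` with `r i ≥ j+1`. -/
def conj {m : ℕ} (r : Fin m → ℕ) (n : ℕ) : Fin n → ℕ :=
  fun j => (Finset.univ.filter fun i => (j : ℕ) + 1 ≤ r i).card

/-- Dominance order for (sorted) vectors: all leading partial sums compare. -/
def Dom {n : ℕ} (x y : Fin n → ℕ) : Prop :=
  ∀ k : ℕ, psum x k ≤ psum y k

/-- The candidate meet, defined via componentwise minima of leading partial sums. -/
def meetP {n : ℕ} (x y : Fin n → ℕ) : Fin n → ℕ :=
  fun k => min (psum x ((k : ℕ) + 1)) (psum y ((k : ℕ) + 1))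
      - min (psum x (k : ℕ)) (psum y (k : ℕ))

/-!
The partial sums of `meetP x y` are the pointwise minima of those of `x` and `y`, so the meet is
majorized by every antitone `w` majorizing both, once it is itself antitone (which holds because
the increments of `min (psum x k) (psum y k)` shrink along with those of `x` and `y`). Its `k`-th
entry is `min (X + x k) (Y + y k) - min X Y ≤ max (x k) (y k)`, which gives the bound by `c`.
-/

section PartialSums

variable {n : ℕ} {α : Type*} [AddCommMonoid α]

lemma psum_of_le (f : Fin n → α) {k : ℕ} (h : n ≤ k) : psum f k = ∑ i, f i :=
  Finset.sum_congr rfl fun i _ => if_pos (i.isLt.trans_le h)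

lemma psum_succ (f : Fin n → α) (k : ℕ) :
    psum f (k + 1) = psum f k + if h : k < n then f ⟨k, h⟩ else 0 := by
  have hsplit : ∀ i : Fin n, (if (i : ℕ) < k + 1 then f i else 0)
      = (if (i : ℕ) < k then f i else 0) + (if (i : ℕ) = k then f i else 0) := by
    intro i
    by_cases hlt : (i : ℕ) < k
    · simp [hlt, hlt.ne, Nat.lt_succ_of_lt hlt]
    · by_cases heq : (i : ℕ) = k <;> simp [hlt, heq]; omega
  rw [psum, Finset.sum_congr rfl fun i _ => hsplit i, Finset.sum_add_distrib]
  congr 1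
  split_ifs with hk
  · simp [← Fin.ext_iff (b := ⟨k, hk⟩)]
  · exact Finset.sum_eq_zero fun i _ => if_neg (by omega)

lemma psum_succ_of_lt (f : Fin n → α) (i : Fin n) : psum f (i + 1) = psum f i + f i := by
  rw [psum_succ, dif_pos i.isLt]

end PartialSums

lemma psum_le_psum_succ {n : ℕ} (f : Fin n → ℕ) (k : ℕ) : psum f k ≤ psum f (k + 1) := by
  rw [psum_succ]
  exact Nat.le_add_right _ _

lemma sortDesc_eq_self_of_antitone {n : ℕ} {α : Type*} [LinearOrder α] {x : Fin n → α}
    (hx : Antitone x) : sortDesc x = x := by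
  have hsort : x ∘ Fin.revPerm = x ∘ Tuple.sort x :=
    Tuple.comp_sort_eq_comp_iff_monotone.mpr fun i j hij => hx (Fin.rev_le_rev.mpr hij)
  funext i
  simpa [sortDesc, sortAsc] using (congrFun hsort i.rev).symm

lemma conj_antitone {m : ℕ} (r : Fin m → ℕ) (n : ℕ) : Antitone (conj r n) :=
  fun _ _ hab => Finset.card_le_card <| Finset.monotone_filter_right _
    fun _ _ hi => le_trans (Nat.succ_le_succ hab) hi

section Meet

variable {n : ℕ} (x y : Fin n → ℕ)

lemma psum_meetP (k : ℕ) : psum (meetP x y) k = min (psum x k) (psum y k) := by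
  induction k with
  | zero => simp [psum]
  | succ k ih =>
    rw [psum_succ, ih]
    by_cases hk : k < n
    · have hx := psum_le_psum_succ x k
      have hy := psum_le_psum_succ y k
      simp only [dif_pos hk, meetP]
      omega
    · have hnk : n ≤ k := Nat.le_of_not_lt hk
      simp [dif_neg hk, psum_of_le _ hnk, psum_of_le _ hnk.step]

lemma meetP_le_max (k : Fin n) : meetP x y k ≤ max (x k) (y k) := by
  simp only [meetP, psum_succ_of_lt]
  omega

lemma meetP_antitone (hx : Antitone x) (hy : Antitone y) : Antitone (meetP x y) := by
  cases n with
  | zero => exact fun i => i.elim0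
  | succ n =>
    refine Fin.antitone_iff_succ_le.mpr fun i => ?_
    have hxi : x i.succ ≤ x i.castSucc := hx i.castSucc_le_succ
    have hyi : y i.succ ≤ y i.castSucc := hy i.castSucc_le_succ
    have hsucc : ((i.succ : Fin (n + 1)) : ℕ) = (i.castSucc : ℕ) + 1 := rfl
    simp only [meetP, psum_succ_of_lt]
    simp only [hsucc, psum_succ_of_lt]
    omega

lemma sum_meetP {w : Fin n → ℕ} (hxw : ∑ i, x i = ∑ i, w i) (hyw : ∑ i, y i = ∑ i, w i) :
    ∑ i, meetP x y i = ∑ i, w i := by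
  rw [← psum_of_le _ le_rfl, psum_meetP, psum_of_le _ le_rfl, psum_of_le _ le_rfl, hxw, hyw,
    min_self]

lemma Maj.meetP {x y w : Fin n → ℕ} (hx : Antitone x) (hy : Antitone y) (hw : Antitone w)
    (hxw : Maj x w) (hyw : Maj y w) : Maj (meetP x y) w := by
  refine ⟨fun k => ?_, sum_meetP x y hxw.2 hyw.2⟩
  have hxk := hxw.1 k
  rw [sortDesc_eq_self_of_antitone hx, sortDesc_eq_self_of_antitone hw] at hxk
  rw [sortDesc_eq_self_of_antitone (meetP_antitone x y hx hy), sortDesc_eq_self_of_antitone hw,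
    psum_meetP]
  exact (min_le_left _ _).trans hxk

end Meet

theorem stmt_15_general {m n : ℕ} (c : Fin n → ℕ) (r : Fin m → ℕ)
    (x y : Fin n → ℕ)
    (hx : Antitone x) (hxm : Maj x (conj r n)) (hxc : x ≤ c)
    (hy : Antitone y) (hym : Maj y (conj r n)) (hyc : y ≤ c) :
    meetP x y ≤ c ∧ Maj (meetP x y) (conj r n) :=
  ⟨fun k => (meetP_le_max x y k).trans (max_le (hxc k) (hyc k)),
    hxm.meetP hx hy (conj_antitone r n) hym⟩

theorem stmt_15 {m n : ℕ} (c : Fin n → ℕ) (hc : Antitone c) (r : Fin m → ℕ)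
    (x y : Fin n → ℕ)
    (hx : Antitone x) (hxm : Maj x (conj r n)) (hxc : x ≤ c)
    (hy : Antitone y) (hym : Maj y (conj r n)) (hyc : y ≤ c) :
    meetP x y ≤ c ∧ Maj (meetP x y) (conj r n) :=
  stmt_15_general c r x y hx hxm hxc hy hym hyc
end
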